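/- arXiv:1512.04619 — 2 statements merged into one kernel-verified Lean document; each statement's English description precedes it below -/
import Mathlib

section
/- Consider a single step of an s-stage diagonally implicit Runge-Kutta scheme applied to the linear ODE M u' = A u with invertible mass matrix M: stage equations M kᵢ = Δt · A (u⁰ + Σ_{j≤i} a_{ij} k_j) for i = 1,…,s, and update u¹ = u⁰ + Σᵢ bᵢ kᵢ. If Δt is small enough that all stage systems are uniquely solvable, then for any vectors w⁰, w¹ ∈ ℝ^N the identity (w¹)ᵀ u¹ − (w⁰)ᵀ u⁰ = 0 holds whenever w⁰ = w¹ + Σᵢ Δt Aᵀ κᵢ and Mᵀ κᵢ = bᵢ w¹ + Σ_{j≥i} a_{ji} Δt Aᵀ κ_j, i.e., the discrete adjoint variables (w, κ) defined by the fully discrete adjoint recursion satisfy the duality pairing conservation (w⁰)ᵀ u⁰ = (w¹)ᵀ u¹. -/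
open Matrix Finset

private lemma dp_sum_right {N : ℕ} {ι : Type*} (v : Fin N → ℝ) (t : Finset ι)
    (f : ι → Fin N → ℝ) : v ⬝ᵥ (∑ i ∈ t, f i) = ∑ i ∈ t, v ⬝ᵥ f i := by
  simp only [dotProduct, Finset.sum_apply, Finset.mul_sum]
  exact Finset.sum_comm

private lemma dp_sum_left {N : ℕ} {ι : Type*} (v : Fin N → ℝ) (t : Finset ι)
    (f : ι → Fin N → ℝ) : (∑ i ∈ t, f i) ⬝ᵥ v = ∑ i ∈ t, f i ⬝ᵥ v := by
  simp only [dotProduct, Finset.sum_apply, Finset.sum_mul]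
  exact Finset.sum_comm

/-- **Discrete adjoint duality pairing conservation for one DIRK step** applied to the
linear ODE `M u' = A u`: if `(w⁰, w¹, κᵢ)` satisfy the discrete adjoint recursion, then
`(w¹)ᵀ u¹ = (w⁰)ᵀ u⁰`. -/
theorem dirk_adjoint_pairing_conservation
    {N s : ℕ}
    (M A : Matrix (Fin N) (Fin N) ℝ) (hM : IsUnit M)
    (a : Fin s → Fin s → ℝ) (b : Fin s → ℝ) (Δt : ℝ)
    (hsolv : ∀ i : Fin s, IsUnit (M - (Δt * a i i) • A))
    (u0 u1 : Fin N → ℝ) (k : Fin s → Fin N → ℝ)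
    (hstage : ∀ i : Fin s,
      M.mulVec (k i)
        = Δt • A.mulVec (u0 + ∑ j ∈ Finset.univ.filter (· ≤ i), a i j • k j))
    (hupdate : u1 = u0 + ∑ i, b i • k i)
    (w0 w1 : Fin N → ℝ) (κ : Fin s → Fin N → ℝ)
    (hw : w0 = w1 + ∑ i, Δt • Aᵀ.mulVec (κ i))
    (hκ : ∀ i : Fin s,
      Mᵀ.mulVec (κ i)
        = b i • w1 + ∑ j ∈ Finset.univ.filter (i ≤ ·), (a j i * Δt) • Aᵀ.mulVec (κ j)) :
    w1 ⬝ᵥ u1 - w0 ⬝ᵥ u0 = 0 := by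
  have hAdj : ∀ (v x : Fin N → ℝ), v ⬝ᵥ A.mulVec x = Aᵀ.mulVec v ⬝ᵥ x := by
    intro v x
    rw [Matrix.dotProduct_mulVec, ← Matrix.mulVec_transpose]
  have hMAdj : ∀ (v x : Fin N → ℝ), v ⬝ᵥ M.mulVec x = Mᵀ.mulVec v ⬝ᵥ x := by
    intro v x
    rw [Matrix.dotProduct_mulVec, ← Matrix.mulVec_transpose]
  have h1 : ∀ i : Fin s, κ i ⬝ᵥ M.mulVec (k i)
      = Δt * (Aᵀ.mulVec (κ i) ⬝ᵥ u0)
        + ∑ j ∈ Finset.univ.filter (· ≤ i), Δt * (a i j * (Aᵀ.mulVec (κ i) ⬝ᵥ k j)) := by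
    intro i
    rw [hstage i, dotProduct_smul, hAdj, dotProduct_add, dp_sum_right, smul_eq_mul,
      mul_add, Finset.mul_sum]
    simp [dotProduct_smul, smul_eq_mul]
  have h2 : ∀ i : Fin s, κ i ⬝ᵥ M.mulVec (k i)
      = b i * (w1 ⬝ᵥ k i)
        + ∑ j ∈ Finset.univ.filter (i ≤ ·), a j i * Δt * (Aᵀ.mulVec (κ j) ⬝ᵥ k i) := by
    intro i
    rw [hMAdj, hκ i, add_dotProduct, dp_sum_left]
    simp [smul_dotProduct, smul_eq_mul]
  have hswap :
      ∑ i : Fin s, ∑ j ∈ Finset.univ.filter (i ≤ ·), a j i * Δt * (Aᵀ.mulVec (κ j) ⬝ᵥ k i)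
      = ∑ i : Fin s, ∑ j ∈ Finset.univ.filter (· ≤ i), Δt * (a i j * (Aᵀ.mulVec (κ i) ⬝ᵥ k j)) := by
    rw [Finset.sum_comm' (t' := (Finset.univ : Finset (Fin s)))
      (s' := fun j => Finset.univ.filter (· ≤ j))
      (fun x y => by simp [and_comm])]
    apply Finset.sum_congr rfl
    intro i _
    apply Finset.sum_congr rfl
    intro j _
    ring
  have hkey : ∑ i : Fin s, b i * (w1 ⬝ᵥ k i) = ∑ i : Fin s, Δt * (Aᵀ.mulVec (κ i) ⬝ᵥ u0) := by
    calc ∑ i : Fin s, b i * (w1 ⬝ᵥ k i)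
        = (∑ i : Fin s, κ i ⬝ᵥ M.mulVec (k i))
          - ∑ i : Fin s, ∑ j ∈ Finset.univ.filter (i ≤ ·), a j i * Δt * (Aᵀ.mulVec (κ j) ⬝ᵥ k i) := by
          rw [Finset.sum_congr rfl (fun i _ => h2 i), Finset.sum_add_distrib]; ring
      _ = ∑ i : Fin s, Δt * (Aᵀ.mulVec (κ i) ⬝ᵥ u0) := by
          rw [Finset.sum_congr rfl (fun i _ => h1 i), Finset.sum_add_distrib, hswap]; ring
  rw [hupdate, hw]
  rw [dotProduct_add, add_dotProduct, dp_sum_right, dp_sum_left]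
  simp only [dotProduct_smul, smul_dotProduct, smul_eq_mul]
  rw [hkey]
  ring
end

section
/- Consider the fully discrete system consisting of equations r̃⁽⁰⁾(u⁰, μ) = u⁰ − u₀(μ) = 0, r̃⁽ⁿ⁾ = uⁿ − uⁿ⁻¹ − Σᵢ bᵢ kᵢⁿ = 0, and Rᵢⁿ = M kᵢⁿ − Δtₙ r(uᵢⁿ, μ, tₙ₋₁ + cᵢΔtₙ) = 0, where uᵢⁿ = uⁿ⁻¹ + Σ_{j≤i} a_{ij} k_jⁿ, for n = 1,…,N_t, i = 1,…,s. Suppose all quantities are differentiable in μ. If the dual variables λⁿ, κᵢⁿ satisfy the fully discrete adjoint equations (∂r̃⁽ᴺᵗ⁾/∂u⁽ᴺᵗ⁾)ᵀ λ⁽ᴺᵗ⁾ = (∂F/∂u⁽ᴺᵗ⁾)ᵀ; (∂r̃⁽ⁿ⁾/∂u⁽ⁿ⁻¹⁾)ᵀ λⁿ + (∂r̃⁽ⁿ⁻¹⁾/∂u⁽ⁿ⁻¹⁾)ᵀ λⁿ⁻¹ = (∂F/∂u⁽ⁿ⁻¹⁾)ᵀ − Σᵢ (∂Rᵢⁿ/∂u⁽ⁿ⁻¹⁾)ᵀ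 κᵢⁿ; and Σ_{j≥i} (∂R_jⁿ/∂kᵢⁿ)ᵀ κ_jⁿ = (∂F/∂kᵢⁿ)ᵀ − (∂r̃⁽ⁿ⁾/∂kᵢⁿ)ᵀ λⁿ, then dF/dμ = ∂F/∂μ − Σ_{n=0}^{N_t} (λⁿ)ᵀ ∂r̃⁽ⁿ⁾/∂μ − Σ_{n=1}^{N_t} Σ_{i=1}^s (κᵢⁿ)ᵀ ∂Rᵢⁿ/∂μ, independent of the state sensitivities ∂uⁿ/∂μ and ∂kᵢⁿ/∂μ. -/
open Matrix Finset

/-- The grand state tuple `(u⁰,…,u^{N_t}, k₁¹,…,k_s^{N_t}, μ)`. -/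
abbrev DirkState (N s Nt Mp : ℕ) :=
  (Fin (Nt + 1) → Fin N → ℝ) × (Fin Nt → Fin s → Fin N → ℝ) × (Fin Mp → ℝ)

/-- The update residuals: `r̃⁽⁰⁾ = u⁰ − u₀(μ)` and
`r̃⁽ⁿ⁾ = uⁿ − uⁿ⁻¹ − Σᵢ bᵢ kᵢⁿ` for `n ≥ 1`. -/
noncomputable def updResidual {N s Nt Mp : ℕ} (bRK : Fin s → ℝ)
    (u0fun : (Fin Mp → ℝ) → Fin N → ℝ) (n : Fin (Nt + 1))
    (P : DirkState N s Nt Mp) : Fin N → ℝ :=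
  Fin.cases (motive := fun _ => Fin N → ℝ)
    (P.1 0 - u0fun P.2.2)
    (fun n' => P.1 n'.succ - P.1 n'.castSucc - ∑ i, bRK i • P.2.1 n' i) n

/-- The stage residuals `Rᵢⁿ = M kᵢⁿ − Δtₙ r(uᵢⁿ, μ, tₙ₋₁ + cᵢ Δtₙ)` with
`uᵢⁿ = uⁿ⁻¹ + Σ_{j≤i} a_{ij} k_jⁿ`. -/
noncomputable def stageResidual {N s Nt Mp : ℕ}
    (Mmat : Matrix (Fin N) (Fin N) ℝ) (aRK : Fin s → Fin s → ℝ) (cRK : Fin s → ℝ)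
    (Δt tprev : Fin Nt → ℝ)
    (r : (Fin N → ℝ) → (Fin Mp → ℝ) → ℝ → Fin N → ℝ)
    (n : Fin Nt) (i : Fin s) (P : DirkState N s Nt Mp) : Fin N → ℝ :=
  Mmat.mulVec (P.2.1 n i)
    - Δt n • r (P.1 n.castSucc + ∑ j ∈ Finset.univ.filter (· ≤ i), aRK i j • P.2.1 n j)
        P.2.2 (tprev n + cRK i * Δt n)

/-- Perturbation direction in the `uⁿ` slot. -/
def uDir {N s Nt Mp : ℕ} (n : Fin (Nt + 1)) (z : Fin N → ℝ) : DirkState N s Nt Mp :=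
  (Function.update 0 n z, 0, 0)

/-- Perturbation direction in the `kᵢⁿ` slot. -/
def kDir {N s Nt Mp : ℕ} (n : Fin Nt) (i : Fin s) (z : Fin N → ℝ) :
    DirkState N s Nt Mp :=
  (0, Function.update 0 n (Function.update 0 i z), 0)

/-- Perturbation direction in the parameter slot. -/
def μDir {N s Nt Mp : ℕ} (w : Fin Mp → ℝ) : DirkState N s Nt Mp := (0, 0, w)

/-! ### Auxiliary lemmas for the adjoint gradient theorem -/

lemma fderiv_zero_of_line_const {E F : Type*} [NormedAddCommGroup E] [NormedSpace ℝ E]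
    [NormedAddCommGroup F] [NormedSpace ℝ F]
    {f : E → F} {x : E} (hf : DifferentiableAt ℝ f x) (D : E)
    (h : ∀ t : ℝ, f (x + t • D) = f x) : fderiv ℝ f x D = 0 := by
  have hc : HasDerivAt (fun t : ℝ => x + t • D) D 0 := by
    simpa using ((hasDerivAt_id (0:ℝ)).smul_const D).const_add x
  have hx0 : x + (0:ℝ) • D = x := by simp
  have hf' : HasFDerivAt f (fderiv ℝ f x) (x + (0:ℝ) • D) := by
    rw [hx0]; exact hf.hasFDerivAt
  have h1 : HasDerivAt (fun t : ℝ => f (x + t • D)) (fderiv ℝ f x D) 0 := by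
    exact hf'.comp_hasDerivAt (0:ℝ) hc
  have h2 : HasDerivAt (fun t : ℝ => f (x + t • D)) 0 0 := by
    simp only [h]; exact hasDerivAt_const _ _
  exact h1.unique h2

/-- The continuous linear map `v ↦ c ⬝ᵥ v`. -/
noncomputable def dotCLM {N : ℕ} (c : Fin N → ℝ) : (Fin N → ℝ) →L[ℝ] ℝ :=
  LinearMap.toContinuousLinearMap
    { toFun := fun v => c ⬝ᵥ v
      map_add' := fun x y => dotProduct_add c x y
      map_smul' := fun t x => by simp [dotProduct_smul] }

@[simp] lemma dotCLM_apply {N : ℕ} (c v : Fin N → ℝ) : dotCLM c v = c ⬝ᵥ v := rfl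

section AdjointAux

variable {N s Nt Mp : ℕ} (bRK : Fin s → ℝ) (u0fun : (Fin Mp → ℝ) → Fin N → ℝ)
  (Mmat : Matrix (Fin N) (Fin N) ℝ) (aRK : Fin s → Fin s → ℝ) (cRK : Fin s → ℝ)
  (Δt tprev : Fin Nt → ℝ) (r : (Fin N → ℝ) → (Fin Mp → ℝ) → ℝ → Fin N → ℝ)

lemma updResidual_differentiable (hu0 : Differentiable ℝ u0fun) (n : Fin (Nt+1)) :
    Differentiable ℝ (updResidual bRK u0fun n (N := N) (s := s)) := by
  induction n using Fin.cases with
  | zero =>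
    have : updResidual bRK u0fun (0 : Fin (Nt+1)) (N := N) (s := s)
        = fun P => P.1 0 - u0fun P.2.2 := by
      funext P; simp [updResidual]
    rw [this]; fun_prop
  | succ n' =>
    have : updResidual bRK u0fun n'.succ (N := N) (s := s)
        = fun P => P.1 n'.succ - P.1 n'.castSucc - ∑ i, bRK i • P.2.1 n' i := by
      funext P; simp [updResidual]
    rw [this]; fun_prop

lemma stageResidual_differentiable
    (hr : Differentiable ℝ (fun q : (Fin N → ℝ) × (Fin Mp → ℝ) × ℝ => r q.1 q.2.1 q.2.2))
    (n : Fin Nt) (i : Fin s) :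
    Differentiable ℝ (stageResidual Mmat aRK cRK Δt tprev r n i) := by
  unfold stageResidual
  apply Differentiable.sub
  · have h1 : Differentiable ℝ (fun v : Fin N → ℝ => Mmat.mulVec v) := by
      have : (fun v : Fin N → ℝ => Mmat.mulVec v) = ⇑(Matrix.mulVecLin Mmat) := by
        funext v; simp
      rw [this]
      exact (LinearMap.toContinuousLinearMap (Matrix.mulVecLin Mmat)).differentiable
    exact h1.comp (by fun_prop)
  · apply Differentiable.fun_const_smul
    have : (fun P : DirkState N s Nt Mp =>
        r (P.1 n.castSucc + ∑ j ∈ Finset.univ.filter (· ≤ i), aRK i j • P.2.1 n j)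
          P.2.2 (tprev n + cRK i * Δt n))
        = (fun q : (Fin N → ℝ) × (Fin Mp → ℝ) × ℝ => r q.1 q.2.1 q.2.2) ∘
          (fun P : DirkState N s Nt Mp =>
            (P.1 n.castSucc + ∑ j ∈ Finset.univ.filter (· ≤ i), aRK i j • P.2.1 n j,
              P.2.2, tprev n + cRK i * Δt n)) := rfl
    rw [this]
    exact hr.comp (by fun_prop)

lemma smul_uDir (t : ℝ) (m : Fin (Nt+1)) (z : Fin N → ℝ) :
    t • (uDir m z : DirkState N s Nt Mp) = uDir m (t • z) := by
  unfold uDir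
  refine Prod.ext ?_ (Prod.ext ?_ ?_) <;> simp
  funext q; by_cases h : q = m <;> simp [Function.update_apply, h]

lemma smul_kDir (t : ℝ) (n : Fin Nt) (i : Fin s) (z : Fin N → ℝ) :
    t • (kDir n i z : DirkState N s Nt Mp) = kDir n i (t • z) := by
  unfold kDir
  refine Prod.ext ?_ (Prod.ext ?_ ?_) <;> simp
  funext q j; by_cases h : q = n <;> by_cases h2 : j = i <;>
    simp [Function.update_apply, h, h2]

lemma inv_upd0_u (x : DirkState N s Nt Mp) (m : Fin (Nt+1)) (z : Fin N → ℝ) (hm : m ≠ 0) :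
    updResidual bRK u0fun 0 (x + uDir m z) = updResidual bRK u0fun 0 x := by
  simp [updResidual, uDir, Function.update_apply, (Ne.symm hm)]

lemma inv_upd0_k (x : DirkState N s Nt Mp) (n : Fin Nt) (i : Fin s) (z : Fin N → ℝ) :
    updResidual bRK u0fun 0 (x + kDir n i z) = updResidual bRK u0fun 0 x := by
  simp [updResidual, kDir]

lemma inv_updS_u (x : DirkState N s Nt Mp) (n' : Fin Nt) (m : Fin (Nt+1)) (z : Fin N → ℝ)
    (h1 : m ≠ n'.succ) (h2 : m ≠ n'.castSucc) :
    updResidual bRK u0fun n'.succ (x + uDir m z) = updResidual bRK u0fun n'.succ x := by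
  simp [updResidual, uDir, Function.update_apply, Ne.symm h1, Ne.symm h2]

lemma inv_updS_k (x : DirkState N s Nt Mp) (n' : Fin Nt) (n : Fin Nt) (i : Fin s)
    (z : Fin N → ℝ) (h : n ≠ n') :
    updResidual bRK u0fun n'.succ (x + kDir n i z) = updResidual bRK u0fun n'.succ x := by
  simp [updResidual, kDir, Function.update_apply, Ne.symm h]

lemma inv_stage_u (x : DirkState N s Nt Mp) (n' : Fin Nt) (i : Fin s) (m : Fin (Nt+1))
    (z : Fin N → ℝ) (h : m ≠ n'.castSucc) :
    stageResidual Mmat aRK cRK Δt tprev r n' i (x + uDir m z)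
      = stageResidual Mmat aRK cRK Δt tprev r n' i x := by
  simp [stageResidual, uDir, Function.update_apply, Ne.symm h]

lemma inv_stage_k (x : DirkState N s Nt Mp) (n' : Fin Nt) (i' : Fin s) (n : Fin Nt)
    (j : Fin s) (z : Fin N → ℝ) (h : n ≠ n' ∨ ¬ (j ≤ i')) :
    stageResidual Mmat aRK cRK Δt tprev r n' i' (x + kDir n j z)
      = stageResidual Mmat aRK cRK Δt tprev r n' i' x := by
  rcases h with h | h
  · simp [stageResidual, kDir, Function.update_apply, Ne.symm h]
  · have hji : j ≠ i' := fun e => h (e ▸ le_refl j)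
    simp only [stageResidual, kDir, Prod.snd_add, Prod.fst_add, Pi.add_apply]
    by_cases hn : n' = n
    · subst hn
      have hsum : (∑ x_1 ∈ filter (fun x => x ≤ i') univ,
            (aRK i' x_1 • x.2.1 n' x_1 + if x_1 = j then aRK i' x_1 • z else 0))
          = ∑ x_1 ∈ filter (fun x => x ≤ i') univ, aRK i' x_1 • x.2.1 n' x_1 := by
        apply Finset.sum_congr rfl
        intro j' hj'
        have hne : j' ≠ j := fun e => h (e ▸ (Finset.mem_filter.mp hj').2)
        simp [hne]
      simp [Function.update_apply, hji, Ne.symm hji]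
      rw [hsum]
    · simp [Function.update_apply, hn]

variable (hu0 : Differentiable ℝ u0fun)
  (hr : Differentiable ℝ (fun q : (Fin N → ℝ) × (Fin Mp → ℝ) × ℝ => r q.1 q.2.1 q.2.2))

include hu0 in
lemma fz_upd0_u (x : DirkState N s Nt Mp) (m : Fin (Nt+1)) (z : Fin N → ℝ) (hm : m ≠ 0) :
    fderiv ℝ (updResidual bRK u0fun 0) x (uDir m z) = 0 := by
  refine fderiv_zero_of_line_const
    ((updResidual_differentiable bRK u0fun hu0 0) x) _ (fun t => ?_)
  rw [smul_uDir]; exact inv_upd0_u bRK u0fun x m _ hm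

include hu0 in
lemma fz_upd0_k (x : DirkState N s Nt Mp) (n : Fin Nt) (i : Fin s) (z : Fin N → ℝ) :
    fderiv ℝ (updResidual bRK u0fun 0) x (kDir n i z) = 0 := by
  refine fderiv_zero_of_line_const
    ((updResidual_differentiable bRK u0fun hu0 0) x) _ (fun t => ?_)
  rw [smul_kDir]; exact inv_upd0_k bRK u0fun x n i _

include hu0 in
lemma fz_updS_u (x : DirkState N s Nt Mp) (n' : Fin Nt) (m : Fin (Nt+1)) (z : Fin N → ℝ)
    (h1 : m ≠ n'.succ) (h2 : m ≠ n'.castSucc) :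
    fderiv ℝ (updResidual bRK u0fun n'.succ) x (uDir m z) = 0 := by
  refine fderiv_zero_of_line_const
    ((updResidual_differentiable bRK u0fun hu0 n'.succ) x) _ (fun t => ?_)
  rw [smul_uDir]; exact inv_updS_u bRK u0fun x n' m _ h1 h2

include hu0 in
lemma fz_updS_k (x : DirkState N s Nt Mp) (n' : Fin Nt) (n : Fin Nt) (i : Fin s)
    (z : Fin N → ℝ) (h : n ≠ n') :
    fderiv ℝ (updResidual bRK u0fun n'.succ) x (kDir n i z) = 0 := by
  refine fderiv_zero_of_line_const
    ((updResidual_differentiable bRK u0fun hu0 n'.succ) x) _ (fun t => ?_)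
  rw [smul_kDir]; exact inv_updS_k bRK u0fun x n' n i _ h

include hr in
lemma fz_stage_u (x : DirkState N s Nt Mp) (n' : Fin Nt) (i : Fin s) (m : Fin (Nt+1))
    (z : Fin N → ℝ) (h : m ≠ n'.castSucc) :
    fderiv ℝ (stageResidual Mmat aRK cRK Δt tprev r n' i) x (uDir m z) = 0 := by
  refine fderiv_zero_of_line_const
    ((stageResidual_differentiable Mmat aRK cRK Δt tprev r hr n' i) x) _ (fun t => ?_)
  rw [smul_uDir]; exact inv_stage_u Mmat aRK cRK Δt tprev r x n' i m _ h

include hr in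
lemma fz_stage_k (x : DirkState N s Nt Mp) (n' : Fin Nt) (i' : Fin s) (n : Fin Nt)
    (j : Fin s) (z : Fin N → ℝ) (h : n ≠ n' ∨ ¬ (j ≤ i')) :
    fderiv ℝ (stageResidual Mmat aRK cRK Δt tprev r n' i') x (kDir n j z) = 0 := by
  refine fderiv_zero_of_line_const
    ((stageResidual_differentiable Mmat aRK cRK Δt tprev r hr n' i') x) _ (fun t => ?_)
  rw [smul_kDir]; exact inv_stage_k Mmat aRK cRK Δt tprev r x n' i' n j _ h

end AdjointAux

/-- **Fully discrete adjoint gradient reconstruction.**  If the states `uⁿ(μ), kᵢⁿ(μ)`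
satisfy the fully discrete DIRK equations and the dual variables `λⁿ, κᵢⁿ` satisfy the
fully discrete adjoint equations, then
`dF/dμ = ∂F/∂μ − Σₙ (λⁿ)ᵀ ∂r̃⁽ⁿ⁾/∂μ − Σₙᵢ (κᵢⁿ)ᵀ ∂Rᵢⁿ/∂μ`, independent of the state
sensitivities. -/
theorem fully_discrete_adjoint_gradient
    {N s Nt Mp : ℕ}
    (Mmat : Matrix (Fin N) (Fin N) ℝ) (hM : IsUnit Mmat)
    (aRK : Fin s → Fin s → ℝ) (bRK cRK : Fin s → ℝ)
    (Δt tprev : Fin Nt → ℝ)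
    (r : (Fin N → ℝ) → (Fin Mp → ℝ) → ℝ → Fin N → ℝ)
    (hr : Differentiable ℝ (fun q : (Fin N → ℝ) × (Fin Mp → ℝ) × ℝ => r q.1 q.2.1 q.2.2))
    (u0fun : (Fin Mp → ℝ) → Fin N → ℝ) (hu0 : Differentiable ℝ u0fun)
    (u : Fin (Nt + 1) → (Fin Mp → ℝ) → Fin N → ℝ)
    (k : Fin Nt → Fin s → (Fin Mp → ℝ) → Fin N → ℝ)
    (hu : ∀ n, Differentiable ℝ (u n))
    (hk : ∀ n i, Differentiable ℝ (k n i))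
    (hgov : ∀ (μ : Fin Mp → ℝ) (n : Fin (Nt + 1)),
      updResidual bRK u0fun n (fun m => u m μ, fun m i => k m i μ, μ) = 0)
    (hstage : ∀ (μ : Fin Mp → ℝ) (n : Fin Nt) (i : Fin s),
      stageResidual Mmat aRK cRK Δt tprev r n i (fun m => u m μ, fun m i => k m i μ, μ) = 0)
    (F : DirkState N s Nt Mp → ℝ) (hF : Differentiable ℝ F)
    (μ₀ : Fin Mp → ℝ)
    (lam : Fin (Nt + 1) → Fin N → ℝ) (kap : Fin Nt → Fin s → Fin N → ℝ)
    -- terminal adjoint equation `(∂r̃⁽ᴺᵗ⁾/∂u⁽ᴺᵗ⁾)ᵀ λ⁽ᴺᵗ⁾ = (∂F/∂u⁽ᴺᵗ⁾)ᵀ`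
    (hadjT : ∀ z : Fin N → ℝ,
      lam (Fin.last Nt) ⬝ᵥ
          fderiv ℝ (updResidual bRK u0fun (Fin.last Nt))
            (fun m => u m μ₀, fun m i => k m i μ₀, μ₀) (uDir (Fin.last Nt) z)
        = fderiv ℝ F (fun m => u m μ₀, fun m i => k m i μ₀, μ₀) (uDir (Fin.last Nt) z))
    -- step adjoint equations
    (hadjS : ∀ (n : Fin Nt) (z : Fin N → ℝ),
      lam n.succ ⬝ᵥ
          fderiv ℝ (updResidual bRK u0fun n.succ)
            (fun m => u m μ₀, fun m i => k m i μ₀, μ₀) (uDir n.castSucc z)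
        + lam n.castSucc ⬝ᵥ
          fderiv ℝ (updResidual bRK u0fun n.castSucc)
            (fun m => u m μ₀, fun m i => k m i μ₀, μ₀) (uDir n.castSucc z)
        = fderiv ℝ F (fun m => u m μ₀, fun m i => k m i μ₀, μ₀) (uDir n.castSucc z)
          - ∑ i, kap n i ⬝ᵥ
              fderiv ℝ (stageResidual Mmat aRK cRK Δt tprev r n i)
                (fun m => u m μ₀, fun m i => k m i μ₀, μ₀) (uDir n.castSucc z))
    -- stage adjoint equations
    (hadjK : ∀ (n : Fin Nt) (i : Fin s) (z : Fin N → ℝ),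
      (∑ j ∈ Finset.univ.filter (i ≤ ·),
          kap n j ⬝ᵥ
            fderiv ℝ (stageResidual Mmat aRK cRK Δt tprev r n j)
              (fun m => u m μ₀, fun m i => k m i μ₀, μ₀) (kDir n i z))
        = fderiv ℝ F (fun m => u m μ₀, fun m i => k m i μ₀, μ₀) (kDir n i z)
          - lam n.succ ⬝ᵥ
            fderiv ℝ (updResidual bRK u0fun n.succ)
              (fun m => u m μ₀, fun m i => k m i μ₀, μ₀) (kDir n i z)) :
    ∀ w : Fin Mp → ℝ,
      fderiv ℝ (fun μ => F (fun m => u m μ, fun m i => k m i μ, μ)) μ₀ w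
        = fderiv ℝ F (fun m => u m μ₀, fun m i => k m i μ₀, μ₀) (μDir w)
          - (∑ n, lam n ⬝ᵥ
              fderiv ℝ (updResidual bRK u0fun n)
                (fun m => u m μ₀, fun m i => k m i μ₀, μ₀) (μDir w))
          - ∑ n, ∑ i, kap n i ⬝ᵥ
              fderiv ℝ (stageResidual Mmat aRK cRK Δt tprev r n i)
                (fun m => u m μ₀, fun m i => k m i μ₀, μ₀) (μDir w) := by

  intro w
  set P₀ : DirkState N s Nt Mp := (fun m => u m μ₀, fun m i => k m i μ₀, μ₀) with hP₀
  set Φf : DirkState N s Nt Mp → ℝ := fun P => F P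
      - (∑ p, lam p ⬝ᵥ updResidual bRK u0fun p P)
      - ∑ n, ∑ i, kap n i ⬝ᵥ stageResidual Mmat aRK cRK Δt tprev r n i P with hΦf
  have hΦ : HasFDerivAt Φf
      (fderiv ℝ F P₀
        - (∑ p, (dotCLM (lam p)).comp (fderiv ℝ (updResidual bRK u0fun p) P₀))
        - ∑ n, ∑ i, (dotCLM (kap n i)).comp
            (fderiv ℝ (stageResidual Mmat aRK cRK Δt tprev r n i) P₀)) P₀ := by
    rw [hΦf]
    refine HasFDerivAt.sub (HasFDerivAt.sub (hF P₀).hasFDerivAt ?_) ?_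
    · exact HasFDerivAt.fun_sum fun p _ =>
        ((dotCLM (lam p)).hasFDerivAt.comp P₀
          ((updResidual_differentiable bRK u0fun hu0 p P₀).hasFDerivAt))
    · exact HasFDerivAt.fun_sum fun n _ => HasFDerivAt.fun_sum fun i _ =>
        ((dotCLM (kap n i)).hasFDerivAt.comp P₀
          ((stageResidual_differentiable Mmat aRK cRK Δt tprev r hr n i P₀).hasFDerivAt))
  have hT : ∀ D : DirkState N s Nt Mp, fderiv ℝ Φf P₀ D
      = fderiv ℝ F P₀ D
        - (∑ p, lam p ⬝ᵥ fderiv ℝ (updResidual bRK u0fun p) P₀ D)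
        - ∑ n, ∑ i, kap n i ⬝ᵥ
            fderiv ℝ (stageResidual Mmat aRK cRK Δt tprev r n i) P₀ D := by
    intro D
    rw [hΦ.fderiv]
    simp [ContinuousLinearMap.sub_apply, ContinuousLinearMap.sum_apply]
  have hU : ∀ (m : Fin (Nt+1)) (z : Fin N → ℝ), fderiv ℝ Φf P₀ (uDir m z) = 0 := by
    intro m z
    rw [hT]
    rcases Fin.eq_castSucc_or_eq_last m with ⟨j, rfl⟩ | rfl
    · have h1 : (∑ p, lam p ⬝ᵥ fderiv ℝ (updResidual bRK u0fun p) P₀ (uDir j.castSucc z))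
          = lam j.succ ⬝ᵥ fderiv ℝ (updResidual bRK u0fun j.succ) P₀ (uDir j.castSucc z)
            + lam j.castSucc ⬝ᵥ
                fderiv ℝ (updResidual bRK u0fun j.castSucc) P₀ (uDir j.castSucc z) := by
        have hzero : ∀ p ∈ (univ : Finset (Fin (Nt+1))),
            p ∉ ({j.succ, j.castSucc} : Finset (Fin (Nt+1))) →
            lam p ⬝ᵥ fderiv ℝ (updResidual bRK u0fun p) P₀ (uDir j.castSucc z) = 0 := by
          intro p _ hp
          simp only [Finset.mem_insert, Finset.mem_singleton, not_or] at hp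
          obtain ⟨hp1, hp2⟩ := hp
          rcases Fin.eq_zero_or_eq_succ p with rfl | ⟨q, rfl⟩
          · rw [fz_upd0_u bRK u0fun hu0 P₀ j.castSucc z (Ne.symm hp2)]
            exact dotProduct_zero _
          · rw [fz_updS_u bRK u0fun hu0 P₀ q j.castSucc z (Ne.symm hp2)
              (fun e => hp1 (by rw [show j = q from Fin.castSucc_inj.mp e]))]
            exact dotProduct_zero _
        rw [← Finset.sum_subset (Finset.subset_univ ({j.succ, j.castSucc} :
            Finset (Fin (Nt+1)))) (fun p hp hnp => hzero p hp hnp),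
          Finset.sum_pair (Fin.castSucc_lt_succ (i := j)).ne']
      have h2 : (∑ n, ∑ i, kap n i ⬝ᵥ
            fderiv ℝ (stageResidual Mmat aRK cRK Δt tprev r n i) P₀ (uDir j.castSucc z))
          = ∑ i, kap j i ⬝ᵥ
              fderiv ℝ (stageResidual Mmat aRK cRK Δt tprev r j i) P₀ (uDir j.castSucc z) := by
        apply Finset.sum_eq_single
        · intro n _ hn
          refine Finset.sum_eq_zero fun i _ => ?_
          rw [fz_stage_u Mmat aRK cRK Δt tprev r hr P₀ n i j.castSucc z
            (fun e => hn (Fin.castSucc_inj.mp e).symm)]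
          exact dotProduct_zero _
        · intro h; exact absurd (Finset.mem_univ _) h
      rw [h1, h2]
      have key := hadjS j z
      linarith
    · have h1 : (∑ p, lam p ⬝ᵥ fderiv ℝ (updResidual bRK u0fun p) P₀ (uDir (Fin.last Nt) z))
          = lam (Fin.last Nt) ⬝ᵥ
              fderiv ℝ (updResidual bRK u0fun (Fin.last Nt)) P₀ (uDir (Fin.last Nt) z) := by
        apply Finset.sum_eq_single
        · intro p _ hp
          rcases Fin.eq_zero_or_eq_succ p with rfl | ⟨q, rfl⟩
          · rw [fz_upd0_u bRK u0fun hu0 P₀ (Fin.last Nt) z (Ne.symm hp)]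
            exact dotProduct_zero _
          · rw [fz_updS_u bRK u0fun hu0 P₀ q (Fin.last Nt) z (Ne.symm hp)
              (Fin.castSucc_lt_last q).ne']
            exact dotProduct_zero _
        · intro h; exact absurd (Finset.mem_univ _) h
      have h2 : (∑ n, ∑ i, kap n i ⬝ᵥ
            fderiv ℝ (stageResidual Mmat aRK cRK Δt tprev r n i) P₀ (uDir (Fin.last Nt) z))
          = 0 := by
        refine Finset.sum_eq_zero fun n _ => Finset.sum_eq_zero fun i _ => ?_
        rw [fz_stage_u Mmat aRK cRK Δt tprev r hr P₀ n i (Fin.last Nt) z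
          (Fin.castSucc_lt_last n).ne']
        exact dotProduct_zero _
      rw [h1, h2, hadjT z]
      ring
  have hK : ∀ (n : Fin Nt) (i : Fin s) (z : Fin N → ℝ), fderiv ℝ Φf P₀ (kDir n i z) = 0 := by
    intro n i z
    rw [hT]
    have h1 : (∑ p, lam p ⬝ᵥ fderiv ℝ (updResidual bRK u0fun p) P₀ (kDir n i z))
        = lam n.succ ⬝ᵥ fderiv ℝ (updResidual bRK u0fun n.succ) P₀ (kDir n i z) := by
      apply Finset.sum_eq_single
      · intro p _ hp
        rcases Fin.eq_zero_or_eq_succ p with rfl | ⟨q, rfl⟩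
        · rw [fz_upd0_k bRK u0fun hu0 P₀ n i z]; exact dotProduct_zero _
        · rw [fz_updS_k bRK u0fun hu0 P₀ q n i z (fun e => hp (by rw [e]))]
          exact dotProduct_zero _
      · intro h; exact absurd (Finset.mem_univ _) h
    have h2 : (∑ n', ∑ j, kap n' j ⬝ᵥ
          fderiv ℝ (stageResidual Mmat aRK cRK Δt tprev r n' j) P₀ (kDir n i z))
        = ∑ j ∈ Finset.univ.filter (i ≤ ·), kap n j ⬝ᵥ
            fderiv ℝ (stageResidual Mmat aRK cRK Δt tprev r n j) P₀ (kDir n i z) := by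
      have houter : (∑ n', ∑ j, kap n' j ⬝ᵥ
            fderiv ℝ (stageResidual Mmat aRK cRK Δt tprev r n' j) P₀ (kDir n i z))
          = ∑ j, kap n j ⬝ᵥ
              fderiv ℝ (stageResidual Mmat aRK cRK Δt tprev r n j) P₀ (kDir n i z) := by
        apply Finset.sum_eq_single
        · intro n' _ hn'
          refine Finset.sum_eq_zero fun j _ => ?_
          rw [fz_stage_k Mmat aRK cRK Δt tprev r hr P₀ n' j n i z (Or.inl (Ne.symm hn'))]
          exact dotProduct_zero _
        · intro h; exact absurd (Finset.mem_univ _) h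
      rw [houter, ← Finset.sum_filter_add_sum_filter_not univ (i ≤ ·)]
      have hz2 : (∑ j ∈ Finset.univ.filter (fun j => ¬ i ≤ j), kap n j ⬝ᵥ
            fderiv ℝ (stageResidual Mmat aRK cRK Δt tprev r n j) P₀ (kDir n i z)) = 0 := by
        refine Finset.sum_eq_zero fun j hj => ?_
        rw [fz_stage_k Mmat aRK cRK Δt tprev r hr P₀ n j n i z
          (Or.inr (Finset.mem_filter.mp hj).2)]
        exact dotProduct_zero _
      rw [hz2, add_zero]
    rw [h1, h2]
    have key := hadjK n i z
    linarith
  have hG : HasFDerivAt (fun μ : Fin Mp → ℝ =>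
        ((fun m => u m μ, fun m i => k m i μ, μ) : DirkState N s Nt Mp))
      ((ContinuousLinearMap.pi fun m => fderiv ℝ (u m) μ₀).prod
        ((ContinuousLinearMap.pi fun m =>
            ContinuousLinearMap.pi fun i => fderiv ℝ (k m i) μ₀).prod
          (ContinuousLinearMap.id ℝ (Fin Mp → ℝ)))) μ₀ := by
    refine HasFDerivAt.prodMk ?_ (HasFDerivAt.prodMk ?_ (hasFDerivAt_id μ₀))
    · exact hasFDerivAt_pi.2 fun m => (hu m μ₀).hasFDerivAt
    · exact hasFDerivAt_pi.2 fun m => hasFDerivAt_pi.2 fun i => (hk m i μ₀).hasFDerivAt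
  have hΦG : HasFDerivAt (fun μ =>
      Φf ((fun m => u m μ, fun m i => k m i μ, μ) : DirkState N s Nt Mp)) _ μ₀ :=
    (hΦ.comp μ₀ hG :)
  have hFG : (fun μ => F (fun m => u m μ, fun m i => k m i μ, μ))
      = fun μ => Φf (fun m => u m μ, fun m i => k m i μ, μ) := by
    funext μ
    rw [hΦf]
    simp only [hgov μ, hstage μ, dotProduct_zero, Finset.sum_const_zero, sub_zero]
  have hw : fderiv ℝ (fun μ : Fin Mp → ℝ =>
        ((fun m => u m μ, fun m i => k m i μ, μ) : DirkState N s Nt Mp)) μ₀ w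
      = ((fun m => fderiv ℝ (u m) μ₀ w, fun m i => fderiv ℝ (k m i) μ₀ w, w) :
          DirkState N s Nt Mp) := by
    rw [hG.fderiv]; rfl
  have hdecomp : ((fun m => fderiv ℝ (u m) μ₀ w, fun m i => fderiv ℝ (k m i) μ₀ w, w) :
        DirkState N s Nt Mp)
      = (∑ m, uDir m (fderiv ℝ (u m) μ₀ w))
        + (∑ n, ∑ i, kDir n i (fderiv ℝ (k n i) μ₀ w)) + μDir w := by
    refine Prod.ext ?_ (Prod.ext ?_ ?_)
    · funext q
      simp [Prod.fst_add, Prod.fst_sum, uDir, kDir, μDir, Finset.sum_apply,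
        Function.update_apply, Finset.sum_ite_eq]
    · funext q j
      simp [Prod.fst_add, Prod.snd_add, Prod.fst_sum, Prod.snd_sum, uDir, kDir, μDir,
        Finset.sum_apply, Function.update_apply, ite_apply, Finset.sum_ite_eq]
    · simp [Prod.snd_add, Prod.snd_sum, uDir, kDir, μDir]
  rw [hFG, hΦG.fderiv, ContinuousLinearMap.comp_apply, ← hΦ.fderiv, ← hG.fderiv, hw,
    hdecomp, map_add, map_add]
  simp only [map_sum]
  rw [Finset.sum_eq_zero (fun m _ => hU m _),
    Finset.sum_eq_zero (fun n _ => Finset.sum_eq_zero fun i _ => hK n i _),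
    hT, zero_add, zero_add]
end
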